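/- arXiv:2201.12874 — 2 statements merged into one kernel-verified Lean document; each statement's English description precedes it below -/
import Mathlib

section
/- Let 1 ≤ q < p < ∞ and n ≥ 20, and set ε = n^{−(1/q − 1/p)}. Define x ∈ ℝⁿ by x₁ = 1 and xᵢ = n^{−1/q} for 2 ≤ i ≤ n, and let e₁ be the first standard basis vector. Then ‖x − e₁‖_p ≤ ε‖x‖_p (so e₁ is an (ε, ℓ_p, 1)-norm sparsifier of x), yet every x' ∈ ℝⁿ with at most ⌊n/2⌋ nonzero entries satisfies ‖x − x'‖_q > 0.1‖x‖_q. -/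
open scoped BigOperators ENNReal
open Matrix

/-- Number of nonzero entries of a vector. -/
noncomputable def nnzv {n : ℕ} (x : Fin n → ℝ) : ℕ :=
  (Finset.univ.filter fun i => x i ≠ 0).card

/-- The ℓ_p norm of a vector, for a real exponent `p`. -/
noncomputable def lpNorm {n : ℕ} (p : ℝ) (x : Fin n → ℝ) : ℝ :=
  (∑ i, |x i| ^ p) ^ (1 / p)

/-- `IsHead x c y` : `y` is obtained from `x` by keeping (at most) `c` entries that are
largest in absolute value (exactly `min c n` of them, ties broken arbitrarily) and zeroing out the rest. -/
def IsHead {n : ℕ} (x : Fin n → ℝ) (c : ℕ) (y : Fin n → ℝ) : Prop :=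
  ∃ T : Finset (Fin n), T.card = min c n ∧ (∀ i ∈ T, y i = x i) ∧ (∀ i ∉ T, y i = 0) ∧
    ∀ i ∈ T, ∀ j ∉ T, |x j| ≤ |x i|

/-- The singular values of a real matrix: square roots of the eigenvalues of `Aᵀ * A`. -/
noncomputable def singVals {m n : Type*} [Fintype m] [Fintype n] [DecidableEq n]
    (A : Matrix m n ℝ) : n → ℝ :=
  fun j => Real.sqrt ((show (Aᵀ * A).IsHermitian by
    simpa [Matrix.conjTranspose_eq_transpose_of_trivial] using
      Matrix.isHermitian_conjTranspose_mul_self A).eigenvalues j)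

/-- The Schatten p-(quasi)norm of a real matrix, for a real exponent `p > 0`. -/
noncomputable def schattenF {m n : Type*} [Fintype m] [Fintype n] [DecidableEq n]
    (p : ℝ) (A : Matrix m n ℝ) : ℝ :=
  (∑ j, singVals A j ^ p) ^ (1 / p)

/-- The spectral norm (Schatten ∞-norm): the largest singular value. -/
noncomputable def specNorm {m n : Type*} [Fintype m] [Fintype n] [DecidableEq n]
    (A : Matrix m n ℝ) : ℝ :=
  ⨆ j, singVals A j

open Classical in
/-- The Schatten p-norm with exponent `p ∈ (0,∞]`. -/
noncomputable def schattenE {m n : Type*} [Fintype m] [Fintype n] [DecidableEq n]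
    (p : ℝ≥0∞) (A : Matrix m n ℝ) : ℝ :=
  if p = ⊤ then specNorm A else schattenF p.toReal A

/-- Number of nonzero entries of a matrix. -/
noncomputable def nnz {m n : Type*} [Fintype m] [Fintype n] (A : Matrix m n ℝ) : ℕ :=
  (Finset.univ.filter fun ij : m × n => A ij.1 ij.2 ≠ 0).card

/-! The vector `x` is a unit spike plus a flat tail of `n - 1` entries of size `n^(-1/q)`.
In `ℓ_p` the tail has norm at most `n^(1/p) · n^(-1/q) = ε`, so dropping it costs little.
In `ℓ_q` each tail entry carries mass `1/n`, so `‖x‖_q ≤ 2`, while any `⌊n/2⌋`-sparse vector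
leaves at least `n - 1 - ⌊n/2⌋ ≥ 9n/20` tail entries untouched, which forces an `ℓ_q` error of
at least `(9/20)^(1/q) ≥ 9/20 > 0.2`. -/

section LpNorm

variable {n : ℕ} {p : ℝ}

lemma lpNorm_le_iff (hp : 0 < p) {c : ℝ} (hc : 0 ≤ c) (x : Fin n → ℝ) :
    lpNorm p x ≤ c ↔ ∑ i, |x i| ^ p ≤ c ^ p := by
  rw [lpNorm, one_div]
  exact Real.rpow_inv_le_iff_of_pos (by positivity) hc hp

lemma le_lpNorm_iff (hp : 0 < p) {c : ℝ} (hc : 0 ≤ c) (x : Fin n → ℝ) :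
    c ≤ lpNorm p x ↔ c ^ p ≤ ∑ i, |x i| ^ p := by
  rw [lpNorm, one_div]
  exact Real.le_rpow_inv_iff_of_pos hc (by positivity) hp

lemma abs_le_lpNorm (hp : 0 < p) (x : Fin n → ℝ) (i : Fin n) : |x i| ≤ lpNorm p x :=
  (le_lpNorm_iff hp (abs_nonneg _) x).2 <|
    Finset.single_le_sum (f := fun j => |x j| ^ p) (fun j _ => by positivity) (Finset.mem_univ i)

lemma lpNorm_le_of_forall_abs_le (hp : 0 < p) {c : ℝ} (hc : 0 ≤ c) {x : Fin n → ℝ}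
    (hx : ∀ i, |x i| ≤ c) : lpNorm p x ≤ (n : ℝ) ^ (1 / p) * c := by
  rw [lpNorm_le_iff hp (by positivity), Real.mul_rpow (by positivity) hc,
    ← Real.rpow_mul (Nat.cast_nonneg n), one_div_mul_cancel hp.ne', Real.rpow_one]
  calc ∑ i, |x i| ^ p ≤ ∑ _i : Fin n, c ^ p :=
        Finset.sum_le_sum fun i _ => Real.rpow_le_rpow (abs_nonneg _) (hx i) hp.le
    _ = n * c ^ p := by simp

end LpNorm

lemma card_sub_mul_le_sum_abs_sub_rpow {n : ℕ} {p c : ℝ} (hc : 0 ≤ c) {x y : Fin n → ℝ}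
    {S : Finset (Fin n)} (hS : ∀ i ∈ S, c ≤ |x i| ^ p) {s : ℕ} (hy : nnzv y ≤ s) :
    ((S.card - s : ℕ) : ℝ) * c ≤ ∑ i, |(x - y) i| ^ p := by
  set T := S.filter fun i => y i = 0
  have hT : S.card - s ≤ T.card := by
    have hsplit : T.card + (S.filter fun i => ¬ y i = 0).card = S.card :=
      Finset.card_filter_add_card_filter_not _
    have hnz : (S.filter fun i => ¬ y i = 0).card ≤ nnzv y :=
      Finset.card_le_card (Finset.monotone_filter_left _ (Finset.subset_univ S))
    omega
  calc ((S.card - s : ℕ) : ℝ) * c ≤ T.card * c := by gcongr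
    _ = ∑ _i ∈ T, c := by simp
    _ ≤ ∑ i ∈ T, |(x - y) i| ^ p := by
        refine Finset.sum_le_sum fun i hi => ?_
        obtain ⟨hiS, hyi⟩ := Finset.mem_filter.1 hi
        simpa [hyi] using hS i hiS
    _ ≤ ∑ i, |(x - y) i| ^ p :=
        Finset.sum_le_sum_of_subset_of_nonneg (Finset.subset_univ T) fun i _ _ => by positivity

section SpikePlusFlat

variable {n : ℕ} {q : ℝ} {x : Fin n → ℝ} (i₀ : Fin n)

lemma lpNorm_le_two_of_abs_rpow_le_inv (hq : 1 ≤ q) (h₀ : |x i₀| ≤ 1)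
    (hflat : ∀ i ≠ i₀, |x i| ^ q ≤ (n : ℝ)⁻¹) : lpNorm q x ≤ 2 := by
  rw [lpNorm_le_iff (by linarith) zero_le_two, ← Finset.add_sum_erase _ _ (Finset.mem_univ i₀)]
  have hspike : |x i₀| ^ q ≤ 1 := Real.rpow_le_one (abs_nonneg _) h₀ (by linarith)
  have htail : ∑ i ∈ Finset.univ.erase i₀, |x i| ^ q ≤ 1 :=
    calc ∑ i ∈ Finset.univ.erase i₀, |x i| ^ q ≤ (Finset.univ.erase i₀).card • (n : ℝ)⁻¹ :=
          Finset.sum_le_card_nsmul _ _ _ fun i hi => hflat i (Finset.ne_of_mem_erase hi)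
      _ ≤ (Finset.univ : Finset (Fin n)).card • (n : ℝ)⁻¹ :=
          nsmul_le_nsmul_left (by positivity) (Finset.card_le_card (Finset.erase_subset _ _))
      _ ≤ 1 := by simpa using mul_inv_le_one
  calc |x i₀| ^ q + ∑ i ∈ Finset.univ.erase i₀, |x i| ^ q ≤ 2 := by linarith
    _ ≤ 2 ^ q := by simpa using Real.rpow_le_rpow_of_exponent_le one_le_two hq

lemma nine_div_twenty_le_lpNorm_sub (hn : 20 ≤ n) (hq : 1 ≤ q)
    (hflat : ∀ i ≠ i₀, (n : ℝ)⁻¹ ≤ |x i| ^ q) {y : Fin n → ℝ} (hy : nnzv y ≤ n / 2) :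
    9 / 20 ≤ lpNorm q (x - y) := by
  rw [le_lpNorm_iff (by linarith) (by norm_num)]
  have hcount : (9 / 20 : ℝ) ≤ ((n - 1 - n / 2 : ℕ) : ℝ) * (n : ℝ)⁻¹ := by
    rw [← div_eq_mul_inv, le_div_iff₀ (by positivity), div_mul_eq_mul_div,
      div_le_iff₀ (by norm_num)]
    exact_mod_cast (by omega : 9 * n ≤ (n - 1 - n / 2) * 20)
  calc (9 / 20 : ℝ) ^ q ≤ 9 / 20 := by
        simpa using Real.rpow_le_rpow_of_exponent_ge (by norm_num : (0 : ℝ) < 9 / 20)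
          (by norm_num) hq
    _ ≤ ((n - 1 - n / 2 : ℕ) : ℝ) * (n : ℝ)⁻¹ := hcount
    _ ≤ ∑ i, |(x - y) i| ^ q := by
        simpa using card_sub_mul_le_sum_abs_sub_rpow (S := Finset.univ.erase i₀) (by positivity)
          (fun i hi => hflat i (Finset.ne_of_mem_erase hi)) hy

end SpikePlusFlat

/-- for `q < p`, a good `ℓ_p`-sparsifier need not be a good `ℓ_q`-sparsifier. -/
theorem stmt1 (n : ℕ) (hn : 20 ≤ n) (p q : ℝ) (hq : 1 ≤ q) (hqp : q < p)
    (ε : ℝ) (hε : ε = (n : ℝ) ^ (-(1 / q - 1 / p)))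
    (x e₁ : Fin n → ℝ)
    (hx : ∀ i : Fin n, x i = if (i : ℕ) = 0 then 1 else (n : ℝ) ^ (-(1 / q)))
    (he : ∀ i : Fin n, e₁ i = if (i : ℕ) = 0 then 1 else 0) :
    lpNorm p (x - e₁) ≤ ε * lpNorm p x ∧
    ∀ x' : Fin n → ℝ, nnzv x' ≤ n / 2 → 0.1 * lpNorm q x < lpNorm q (x - x') := by
  have hnR : (0 : ℝ) < n := by positivity
  set a : ℝ := (n : ℝ) ^ (-(1 / q))
  have ha : 0 < a := by positivity
  have haq : a ^ q = (n : ℝ)⁻¹ := by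
    rw [← Real.rpow_mul hnR.le, neg_mul, one_div_mul_cancel (by linarith), Real.rpow_neg_one]
  let i₀ : Fin n := ⟨0, by omega⟩
  have hx₀ : x i₀ = 1 := by simp [hx, i₀]
  have hx_flat : ∀ i ≠ i₀, |x i| = a := fun i hi => by
    rw [hx, if_neg (fun h => hi (Fin.ext h)), abs_of_pos ha]
  refine ⟨?_, fun x' hx' => ?_⟩
  · have hdiff : ∀ i, |(x - e₁) i| ≤ a := fun i => by
      rw [Pi.sub_apply, hx, he]
      split_ifs <;> simp [abs_of_pos ha, ha.le]
    have hε_eq : (n : ℝ) ^ (1 / p) * a = ε := by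
      rw [hε, ← Real.rpow_add hnR]
      ring_nf
    have hx_norm : 1 ≤ lpNorm p x := by simpa [hx₀] using abs_le_lpNorm (by linarith) x i₀
    calc lpNorm p (x - e₁) ≤ ε := hε_eq ▸ lpNorm_le_of_forall_abs_le (by linarith) ha.le hdiff
      _ ≤ ε * lpNorm p x := le_mul_of_one_le_right (hε_eq ▸ by positivity) hx_norm
  · have hx_norm : lpNorm q x ≤ 2 := lpNorm_le_two_of_abs_rpow_le_inv i₀ hq (by simp [hx₀])
      fun i hi => by rw [hx_flat i hi, haq]
    have herr : 9 / 20 ≤ lpNorm q (x - x') := nine_div_twenty_le_lpNorm_sub i₀ hn hq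
      (fun i hi => by rw [hx_flat i hi, haq]) hx'
    linarith
end

section
/- Let 0 < q ≤ 2 and 0 ≤ ε < 1, and let J_n ∈ ℝ^{n×n} be the all-ones matrix (which has rank 1, so ‖J_n‖_{S_q} = n). Then every matrix A' ∈ ℝ^{n×n} with ‖A' − J_n‖_{S_q} ≤ ε·n satisfies nnz(A') ≥ (1 − ε²)·n². -/
open scoped BigOperators ENNReal
open Matrix

/-! For `0 < q ≤ 2` the function `t ↦ t ^ (q / 2)` is subadditive on `[0, ∞)`, so
`‖A‖_F ^ q = (∑ σⱼ²) ^ (q / 2) ≤ ∑ σⱼ ^ q = ‖A‖_{S_q} ^ q`. Every zero entry of `A'` contributes `1`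
to `‖A' − J‖_F²`, hence the number of zero entries is at most `‖A' − J‖_{S_q}² ≤ ε² n²`.
Since `J` has rank one, it has a single nonzero singular value, equal to `‖J‖_F = n`. -/

open Finset

lemma Real.rpow_sum_le_sum_rpow {ι : Type*} (s : Finset ι) {f : ι → ℝ} (hf : ∀ i ∈ s, 0 ≤ f i)
    {p : ℝ} (hp0 : 0 < p) (hp1 : p ≤ 1) :
    (∑ i ∈ s, f i) ^ p ≤ ∑ i ∈ s, f i ^ p :=
  le_sum_of_subadditive_on_pred (fun x : ℝ => x ^ p) (0 ≤ ·) (Real.zero_rpow hp0.ne').le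
    (fun _ _ hx hy => Real.rpow_add_le_add_rpow hx hy hp0.le hp1)
    (fun _ _ => add_nonneg) f hf

lemma Matrix.isHermitian_transpose_mul_self {m n : Type*} [Fintype m] (A : Matrix m n ℝ) :
    (Aᵀ * A).IsHermitian := by
  simpa [conjTranspose_eq_transpose_of_trivial] using isHermitian_conjTranspose_mul_self A

lemma Matrix.posSemidef_transpose_mul_self {m n : Type*} [Fintype m] [Fintype n]
    (A : Matrix m n ℝ) : (Aᵀ * A).PosSemidef := by
  simpa [conjTranspose_eq_transpose_of_trivial] using posSemidef_conjTranspose_mul_self A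

section SingularValues

variable {m n : Type*} [Fintype m] [Fintype n] [DecidableEq n]

lemma singVals_nonneg (A : Matrix m n ℝ) (j : n) : 0 ≤ singVals A j :=
  Real.sqrt_nonneg _

lemma singVals_sq (A : Matrix m n ℝ) (j : n) :
    singVals A j ^ 2 = (isHermitian_transpose_mul_self A).eigenvalues j :=
  Real.sq_sqrt ((posSemidef_transpose_mul_self A).eigenvalues_nonneg j)

lemma sum_singVals_sq (A : Matrix m n ℝ) : ∑ j, singVals A j ^ 2 = ∑ i, ∑ j, A i j ^ 2 := by
  have htrace : (Aᵀ * A).trace = ∑ i, ∑ j, A i j ^ 2 := by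
    simp only [trace, Matrix.diag, mul_apply, transpose_apply, sq]
    exact sum_comm
  simp_rw [singVals_sq, ← htrace, (isHermitian_transpose_mul_self A).trace_eq_sum_eigenvalues]
  rfl

lemma card_singVals_ne_zero (A : Matrix m n ℝ) : #{j | singVals A j ≠ 0} = A.rank := by
  rw [← rank_transpose_mul_self, (isHermitian_transpose_mul_self A).rank_eq_card_non_zero_eigs,
    Fintype.card_subtype]
  refine congrArg card (filter_congr fun j _ => ?_)
  rw [← singVals_sq, pow_ne_zero_iff two_ne_zero]

lemma schattenF_nonneg (q : ℝ) (A : Matrix m n ℝ) : 0 ≤ schattenF q A :=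
  Real.rpow_nonneg (sum_nonneg fun j _ => Real.rpow_nonneg (singVals_nonneg A j) q) _

lemma sum_sq_le_schattenF_sq {q : ℝ} (hq0 : 0 < q) (hq2 : q ≤ 2) (A : Matrix m n ℝ) :
    ∑ i, ∑ j, A i j ^ 2 ≤ schattenF q A ^ 2 := by
  have hσ := singVals_nonneg A
  have hsq : ∀ j, (singVals A j ^ 2) ^ (q / 2) = singVals A j ^ q := fun j => by
    rw [← Real.rpow_natCast, ← Real.rpow_mul (hσ j)]
    congr 1
    push_cast
    field_simp
  have hsub : (∑ j, singVals A j ^ 2) ^ (q / 2) ≤ ∑ j, singVals A j ^ q := by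
    simpa only [hsq] using Real.rpow_sum_le_sum_rpow (p := q / 2) univ
      (fun j _ => sq_nonneg (singVals A j)) (by positivity) (by linarith)
  have hF : 0 ≤ ∑ j, singVals A j ^ 2 := sum_nonneg fun j _ => sq_nonneg _
  calc ∑ i, ∑ j, A i j ^ 2 = ∑ j, singVals A j ^ 2 := (sum_singVals_sq A).symm
    _ = ((∑ j, singVals A j ^ 2) ^ (q / 2)) ^ (2 / q) := by
      rw [← Real.rpow_mul hF, show q / 2 * (2 / q) = 1 by field_simp, Real.rpow_one]
    _ ≤ (∑ j, singVals A j ^ q) ^ (2 / q) := by gcongr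
    _ = schattenF q A ^ 2 := by
      rw [schattenF, ← Real.rpow_natCast, ← Real.rpow_mul]
      · congr 1
        push_cast
        field_simp
      · exact sum_nonneg fun j _ => Real.rpow_nonneg (hσ j) q

lemma schattenF_eq_sqrt_sum_sq_of_rank_le_one {q : ℝ} (hq : 0 < q) {A : Matrix m n ℝ}
    (hA : A.rank ≤ 1) : schattenF q A = √(∑ i, ∑ j, A i j ^ 2) := by
  have hσ := singVals_nonneg A
  set S : Finset n := {j | singVals A j ≠ 0}
  have hq_sum : ∑ j ∈ S, singVals A j ^ q = ∑ j, singVals A j ^ q :=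
    sum_filter_of_ne fun j _ h hj => h (by rw [hj, Real.zero_rpow hq.ne'])
  have hsq_sum : ∑ j ∈ S, singVals A j ^ 2 = ∑ j, singVals A j ^ 2 :=
    sum_filter_of_ne fun j _ h hj => h (by rw [hj, zero_pow two_ne_zero])
  have hS : #S ≤ 1 := (card_singVals_ne_zero A).trans_le hA
  rw [schattenF, ← sum_singVals_sq, ← hq_sum, ← hsq_sum]
  rcases Nat.le_one_iff_eq_zero_or_eq_one.mp hS with h | h
  · rw [card_eq_zero.mp h]
    simp [Real.zero_rpow, hq.ne']
  · obtain ⟨a, ha⟩ := card_eq_one.mp h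
    rw [ha, sum_singleton, sum_singleton, Real.sqrt_sq (hσ a), ← Real.rpow_mul (hσ a),
      mul_one_div_cancel hq.ne', Real.rpow_one]

end SingularValues

lemma card_mul_card_sub_nnz_le_sum_sq_sub {m n : Type*} [Fintype m] [Fintype n]
    (A B : Matrix m n ℝ) (hB : ∀ i j, 1 ≤ |B i j|) :
    (Fintype.card m * Fintype.card n : ℝ) - nnz A ≤ ∑ i, ∑ j, (A - B) i j ^ 2 := by
  set Z : Finset (m × n) := {ij | A ij.1 ij.2 = 0}
  have hsplit : #Z + nnz A = Fintype.card m * Fintype.card n := by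
    rw [nnz, card_filter_add_card_filter_not, card_univ, Fintype.card_prod]
  have hZ : ∀ ij ∈ Z, 1 ≤ (A - B) ij.1 ij.2 ^ 2 := fun ij hij => by
    rw [Matrix.sub_apply, (mem_filter.mp hij).2, zero_sub, neg_sq, ← sq_abs]
    exact one_le_pow₀ (hB _ _)
  calc (Fintype.card m * Fintype.card n : ℝ) - nnz A = #Z := by
        rw [sub_eq_iff_eq_add]; exact_mod_cast hsplit.symm
    _ ≤ ∑ ij ∈ Z, (A - B) ij.1 ij.2 ^ 2 := by simpa using card_nsmul_le_sum _ _ 1 hZ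
    _ ≤ ∑ ij : m × n, (A - B) ij.1 ij.2 ^ 2 := sum_le_univ_sum_of_nonneg fun _ => sq_nonneg _
    _ = ∑ i, ∑ j, (A - B) i j ^ 2 := Fintype.sum_prod_type _

theorem stmt13_general (q ε : ℝ) (hq0 : 0 < q) (hq2 : q ≤ 2)
    (n : ℕ) (J : Matrix (Fin n) (Fin n) ℝ) (hJ : ∀ i j, J i j = 1) :
    schattenF q J = n ∧
    ∀ A' : Matrix (Fin n) (Fin n) ℝ,
      schattenF q (A' - J) ≤ ε * n → (1 - ε ^ 2) * (n : ℝ) ^ 2 ≤ (nnz A' : ℝ) := by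
  have hJrank : J.rank ≤ 1 := by
    rw [show J = vecMulVec 1 1 by ext i j; simp [hJ]]
    exact rank_vecMulVec_le _ _
  refine ⟨?_, fun A' hA' => ?_⟩
  · rw [schattenF_eq_sqrt_sum_sq_of_rank_le_one hq0 hJrank]
    simp [hJ]
  · have hzeros := card_mul_card_sub_nnz_le_sum_sq_sub A' J (fun i j => by simp [hJ])
    have hfrob := sum_sq_le_schattenF_sq hq0 hq2 (A' - J)
    have hschatten := pow_le_pow_left₀ (schattenF_nonneg q (A' - J)) hA' 2
    simp only [Fintype.card_fin] at hzeros
    linarith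

/-- the all-ones matrix `J_n` has `‖J_n‖_{S_q} = n` for `0 < q ≤ 2`, and any
`A'` with `‖A' − J_n‖_{S_q} ≤ ε·n` has at least `(1 − ε²)·n²` nonzero entries. -/
theorem stmt13 (q ε : ℝ) (hq0 : 0 < q) (hq2 : q ≤ 2) (hε0 : 0 ≤ ε) (hε1 : ε < 1)
    (n : ℕ) (J : Matrix (Fin n) (Fin n) ℝ) (hJ : ∀ i j, J i j = 1) :
    schattenF q J = n ∧
    ∀ A' : Matrix (Fin n) (Fin n) ℝ,
      schattenF q (A' - J) ≤ ε * n → (1 - ε ^ 2) * (n : ℝ) ^ 2 ≤ (nnz A' : ℝ) :=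
  stmt13_general q ε hq0 hq2 n J hJ
end
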